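/- arXiv:1307.7370 — 3 statements merged into one kernel-verified Lean document; each statement's English description precedes it below -/
import Mathlib

section
/- For any real number a, any real numbers x, y, and any positive integer n, ∑_{k=0}^{n} C(n,k) E_{n-k,a}(x) [ (a/2)((y+1)^k + (y-1)^k) + (1-a) y^k ] = (x+y)^n. -/
open Finset

noncomputable def E (a : ℝ) : ℕ → ℝ
  | 0 => 1
  | n + 1 =>
      -a * ∑ k ∈ (Finset.Icc 1 ((n + 1) / 2)).attach,
        ((n + 1).choose (2 * k.1) : ℝ) * E a (n + 1 - 2 * k.1)
  decreasing_by
    have h := Finset.mem_Icc.mp k.2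
    omega

noncomputable def EP (a : ℝ) (n : ℕ) (x : ℝ) : ℝ :=
  ∑ k ∈ Finset.range (n + 1), (n.choose k : ℝ) * E a k * x ^ (n - k)

/-!
Write `u ⋆ v` for the binomial convolution `n ↦ ∑ C(n,k) u_k v_{n-k}`; exponential generating
functions turn it into multiplication of power series, so it is commutative and associative.
The defining recurrence says `E_a ⋆ c = δ` for the weight `c_j = (a/2)(1 + (-1)^j) + (1-a)δ_j`
(EGF `a cosh t + 1 - a`). The bracket in the theorem is `c ⋆ y^•`, `E_{n,a}(x)` is `E_a ⋆ x^•`,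
and `y^• ⋆ x^• = (x+y)^•` is the binomial theorem, so the sum is `(E_a ⋆ c) ⋆ y^• ⋆ x^• = (x+y)^•`.
-/

open PowerSeries
open scoped Nat

section BinomialConvolution

variable {R : Type*} [CommSemiring R]

def binConv (u v : ℕ → R) (n : ℕ) : R :=
  ∑ k ∈ range (n + 1), (n.choose k : R) * u k * v (n - k)

theorem binConv_pow_pow (s t : R) (n : ℕ) :
    binConv (s ^ ·) (t ^ ·) n = (s + t) ^ n := by
  rw [binConv, add_pow]
  exact sum_congr rfl fun k _ => by ring

theorem binConv_zero_pow_left (u : ℕ → R) (n : ℕ) :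
    binConv (0 ^ ·) u n = u n := by
  simp [binConv, sum_range_succ']

end BinomialConvolution

section ExponentialGeneratingFunction

variable {K : Type*} [Field K] [CharZero K]

def egf (u : ℕ → K) : K⟦X⟧ :=
  mk fun n => u n / n !

theorem egf_injective : Function.Injective (egf : (ℕ → K) → K⟦X⟧) := by
  intro u v h
  funext n
  simpa [egf, coeff_mk, Nat.factorial_ne_zero] using congrArg (coeff n) h

theorem egf_binConv (u v : ℕ → K) : egf (binConv u v) = egf u * egf v := by
  ext n
  rw [coeff_mul, Nat.sum_antidiagonal_eq_sum_range_succ (fun i j => coeff i (egf u) * coeff j (egf v)),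
    egf, coeff_mk, binConv, sum_div]
  refine sum_congr rfl fun k hk => ?_
  simp only [egf, coeff_mk]
  rw [Nat.cast_choose K (Nat.lt_succ_iff.mp (mem_range.mp hk))]
  field_simp [Nat.factorial_ne_zero]

end ExponentialGeneratingFunction

theorem sum_range_succ_filter_even {M : Type*} [AddCommMonoid M] (f : ℕ → M) (n : ℕ) :
    ∑ j ∈ range (n + 1) with Even j, f j = f 0 + ∑ k ∈ Icc 1 (n / 2), f (2 * k) := by
  have hevens : {j ∈ range (n + 1) | Even j} = insert 0 ((Icc 1 (n / 2)).image (2 * ·)) := by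
    ext j
    simp only [mem_filter, mem_range, mem_insert, mem_image, mem_Icc]
    constructor
    · rintro ⟨hj, k, rfl⟩
      rcases Nat.eq_zero_or_pos k with rfl | hk
      · exact Or.inl rfl
      · exact Or.inr ⟨k, ⟨hk, by omega⟩, by ring⟩
    · rintro (rfl | ⟨k, hk, rfl⟩)
      · exact ⟨by omega, ⟨0, rfl⟩⟩
      · exact ⟨by omega, even_two_mul k⟩
  rw [hevens, sum_insert (by simp), sum_image (mul_right_injective₀ two_ne_zero).injOn]

theorem one_pow_add_neg_one_pow {R : Type*} [Ring R] (j : ℕ) :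
    (1 : R) ^ j + (-1) ^ j = if Even j then 2 else 0 := by
  rcases Nat.even_or_odd j with hj | hj
  · rw [if_pos hj, hj.neg_one_pow, one_pow, one_add_one_eq_two]
  · rw [if_neg (Nat.not_even_iff_odd.mpr hj), hj.neg_one_pow, one_pow, add_neg_cancel]

theorem E_add_mul_sum {a : ℝ} {n : ℕ} (hn : n ≠ 0) :
    E a n + a * ∑ k ∈ Icc 1 (n / 2), (n.choose (2 * k) : ℝ) * E a (n - 2 * k) = 0 := by
  obtain ⟨m, rfl⟩ := Nat.exists_eq_succ_of_ne_zero hn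
  rw [E, sum_attach (Icc 1 ((m + 1) / 2)) fun k => ((m + 1).choose (2 * k) : ℝ) * E a (m + 1 - 2 * k)]
  ring

/-- The bracket of the theorem; its EGF in `t` is `e^{yt} (a cosh t + 1 - a)`. -/
noncomputable def coshPoly (a : ℝ) (k : ℕ) (y : ℝ) : ℝ :=
  a / 2 * ((y + 1) ^ k + (y - 1) ^ k) + (1 - a) * y ^ k

theorem coshPoly_eq_binConv (a y : ℝ) :
    (coshPoly a · y) = binConv (coshPoly a · 0) (y ^ ·) := by
  funext k
  have hpow (s : ℝ) : (y + s) ^ k = ∑ j ∈ range (k + 1), (k.choose j : ℝ) * s ^ j * y ^ (k - j) := by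
    rw [add_comm, ← binConv_pow_pow, binConv]
  have hpow_zero : y ^ k = ∑ j ∈ range (k + 1), (k.choose j : ℝ) * 0 ^ j * y ^ (k - j) := by
    simpa using hpow 0
  rw [coshPoly, sub_eq_add_neg, hpow, hpow, hpow_zero]
  simp only [binConv, mul_sum, ← sum_add_distrib]
  refine sum_congr rfl fun j _ => ?_
  simp only [coshPoly]
  ring

theorem binConv_coshPoly_zero_E (a : ℝ) (n : ℕ) :
    binConv (coshPoly a · 0) (E a) n = 0 ^ n := by
  rcases eq_or_ne n 0 with rfl | hn
  · norm_num [binConv, coshPoly, E]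
  have hweight (j : ℕ) : coshPoly a j 0 = a * (if Even j then 1 else 0) + (1 - a) * 0 ^ j := by
    rw [coshPoly, zero_add, zero_sub, one_pow_add_neg_one_pow]
    split_ifs <;> ring
  have hsplit : binConv (coshPoly a · 0) (E a) n
      = a * ∑ j ∈ range (n + 1) with Even j, (n.choose j : ℝ) * E a (n - j)
        + (1 - a) * binConv (0 ^ ·) (E a) n := by
    simp only [binConv, hweight, sum_filter, mul_sum, ← sum_add_distrib]
    refine sum_congr rfl fun j _ => ?_
    split_ifs <;> ring
  rw [hsplit, binConv_zero_pow_left, sum_range_succ_filter_even, zero_pow hn]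
  simp only [Nat.choose_zero_right, Nat.cast_one, one_mul, Nat.sub_zero]
  linear_combination E_add_mul_sum (a := a) hn

theorem stmt4_general (a x y : ℝ) (n : ℕ) :
    ∑ k ∈ Finset.range (n + 1), (n.choose k : ℝ) * EP a (n - k) x *
        (a / 2 * ((y + 1) ^ k + (y - 1) ^ k) + (1 - a) * y ^ k) = (x + y) ^ n := by
  have hEP : (EP a · x) = binConv (E a) (x ^ ·) := rfl
  have hconv : binConv (coshPoly a · y) (EP a · x) = ((x + y) ^ ·) := by
    apply egf_injective
    calc egf (binConv (coshPoly a · y) (EP a · x))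
        = egf (binConv (coshPoly a · 0) (E a)) * egf (binConv (y ^ ·) (x ^ ·)) := by
          simp only [coshPoly_eq_binConv a y, hEP, egf_binConv]
          ring
      _ = egf ((x + y) ^ ·) := by
          rw [← egf_binConv, funext (binConv_coshPoly_zero_E a), funext (binConv_pow_pow y x),
            funext (binConv_zero_pow_left _), add_comm]
  rw [← congrFun hconv n, binConv]
  exact sum_congr rfl fun k _ => mul_right_comm _ _ _

theorem stmt4 (a x y : ℝ) (n : ℕ) (hn : 1 ≤ n) :
    ∑ k ∈ Finset.range (n + 1), (n.choose k : ℝ) * EP a (n - k) x *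
        (a / 2 * ((y + 1) ^ k + (y - 1) ^ k) + (1 - a) * y ^ k) = (x + y) ^ n :=
  stmt4_general a x y n
end

section
/- For any real number a with a ≠ 0 and a ≠ 1/2, and any positive integer n, E_{2n,a} = a/(2a-1) - (a^2 n)/(2(2a-1)) · ∑_{k=1}^{n} C(2n-1,2k-1) (4^k/k) E_{2n-2k,a}. -/
/-!
With `e n = E_{2n,a}`, the recurrence says that the even exponential generating function
`F(t) = ∑ e n t^(2n)/(2n)!` satisfies `a cosh t · F = (a - 1) F + 1`. Multiplying by `a cosh t`
once more gives `a² cosh² t · F = (a - 1)² F + a cosh t`, and `cosh² t = (1 + cosh 2t) / 2` has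
coefficients `1` and `4^k / 2` (`k ≥ 1`). Comparing coefficients of `t^(2n)` yields
`(2a - 1) E_{2n} = a - a² ∑_{k ≥ 1} C(2n,2k) (4^k / 2) E_{2n-2k}`, and
`n C(2n-1,2k-1) = k C(2n,2k)` turns this into the stated form.
-/

open Finset

theorem Finset.sum_range_two_mul_add_one {M : Type*} [AddCommMonoid M] (f : ℕ → M) (n : ℕ) :
    ∑ i ∈ range (2 * n + 1), f i =
      ∑ k ∈ range (n + 1), f (2 * k) + ∑ k ∈ range n, f (2 * k + 1) := by
  induction n with
  | zero => simp
  | succ n ih =>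
    rw [show 2 * (n + 1) + 1 = 2 * n + 1 + 1 + 1 by ring, sum_range_succ, sum_range_succ, ih,
      sum_range_succ (fun k => f (2 * k)) (n + 1), sum_range_succ (fun k => f (2 * k + 1)) n]
    abel

theorem two_mul_sum_range_choose_two_mul {m : ℕ} (hm : m ≠ 0) :
    2 * ∑ k ∈ range (m + 1), ((2 * m).choose (2 * k) : ℤ) = 4 ^ m := by
  have hsum := sum_range_two_mul_add_one (fun i => ((2 * m).choose i : ℤ)) m
  have halt := sum_range_two_mul_add_one (fun i => (-1) ^ i * ((2 * m).choose i : ℤ)) m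
  rw [Int.alternating_sum_range_choose_of_ne (by omega)] at halt
  simp only [pow_add, pow_mul, neg_one_sq, one_pow, pow_one, one_mul, mul_neg_one, neg_mul,
    sum_neg_distrib] at halt
  rw [← Nat.cast_sum, Nat.sum_range_choose, pow_mul] at hsum
  push_cast at hsum
  linear_combination -hsum - halt

theorem E_succ (a : ℝ) (n : ℕ) :
    E a (n + 1) =
      -a * ∑ k ∈ Icc 1 ((n + 1) / 2), ((n + 1).choose (2 * k) : ℝ) * E a (n + 1 - 2 * k) := by
  rw [E, sum_attach _ (fun k => ((n + 1).choose (2 * k) : ℝ) * E a (n + 1 - 2 * k))]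

theorem E_two_mul_add_two (a : ℝ) (n : ℕ) :
    E a (2 * (n + 1)) =
      -a * ∑ k ∈ range (n + 1),
        ((2 * (n + 1)).choose (2 * (k + 1)) : ℝ) * E a (2 * (n - k)) := by
  rw [show 2 * (n + 1) = 2 * n + 1 + 1 by ring, E_succ, show (2 * n + 1 + 1) / 2 = n + 1 by omega,
    ← Ico_add_one_right_eq_Icc, sum_Ico_eq_sum_range]
  congr 1
  refine sum_congr rfl fun k hk => ?_
  have := mem_range.1 hk
  rw [add_comm 1 k, show 2 * n + 1 + 1 - 2 * (k + 1) = 2 * (n - k) by omega]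

theorem Nat.mul_choose_two_mul_sub_one (n : ℕ) {k : ℕ} (hk : 1 ≤ k) :
    n * (2 * n - 1).choose (2 * k - 1) = (2 * n).choose (2 * k) * k := by
  rcases Nat.eq_zero_or_pos n with rfl | hn
  · simp [Nat.choose_eq_zero_of_lt (by omega : 0 < 2 * k)]
  have h := Nat.add_one_mul_choose_eq (2 * n - 1) (2 * k - 1)
  rw [Nat.sub_add_cancel (by omega), Nat.sub_add_cancel (by omega)] at h
  linarith

/-- If `f n` is the coefficient of `t ^ (2 * n) / (2 * n)!` in an even exponential generating
function, `evenChooseConv f n` is that coefficient after multiplication by `cosh t`. -/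
def evenChooseConv {R : Type*} [CommSemiring R] (f : ℕ → R) (n : ℕ) : R :=
  ∑ k ∈ range (n + 1), ((2 * n).choose (2 * k) : R) * f (n - k)

theorem evenChooseConv_evenChooseConv {R : Type*} [CommSemiring R] (f : ℕ → R) (n : ℕ) :
    evenChooseConv (evenChooseConv f) n = ∑ m ∈ range (n + 1), ((2 * n).choose (2 * m) : R) *
      (∑ k ∈ range (m + 1), ((2 * m).choose (2 * k) : R)) * f (n - m) := by
  set F : ℕ → ℕ → R := fun k j =>
    (2 * n).choose (2 * k) * ((2 * (n - k)).choose (2 * j) * f (n - k - j))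
  calc evenChooseConv (evenChooseConv f) n
      = ∑ k ∈ range (n + 1), ∑ j ∈ range (n + 1 - k), F k j :=
        sum_congr rfl fun k hk => by
          rw [evenChooseConv, mul_sum, show n + 1 - k = n - k + 1 by have := mem_range.1 hk; omega]
    _ = ∑ m ∈ range (n + 1), ∑ k ∈ range (m + 1), F k (m - k) :=
        (sum_range_diag_flip _ _).symm
    _ = _ := sum_congr rfl fun m hm => by
          rw [mul_sum, sum_mul]
          refine sum_congr rfl fun k hk => ?_
          have := mem_range.1 hm
          have := mem_range.1 hk
          simp only [F]
          rw [show 2 * (n - k) = 2 * n - 2 * k by omega, show 2 * (m - k) = 2 * m - 2 * k by omega,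
            show n - k - (m - k) = n - m by omega, ← mul_assoc, ← Nat.cast_mul,
            ← Nat.choose_mul (by omega : 2 * k ≤ 2 * m), Nat.cast_mul]

section

variable (a : ℝ)

theorem mul_evenChooseConv_E {n : ℕ} (hn : n ≠ 0) :
    a * evenChooseConv (fun m => E a (2 * m)) n = (a - 1) * E a (2 * n) := by
  obtain ⟨n, rfl⟩ := Nat.exists_eq_add_one_of_ne_zero hn
  rw [evenChooseConv, sum_range_succ']
  simp only [Nat.add_sub_add_right, mul_zero, Nat.choose_zero_right, Nat.cast_one, one_mul,
    Nat.sub_zero]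
  rw [E_two_mul_add_two]
  ring

theorem mul_evenChooseConv_evenChooseConv_E (n : ℕ) :
    a * evenChooseConv (evenChooseConv fun m => E a (2 * m)) n =
      (a - 1) * evenChooseConv (fun m => E a (2 * m)) n + 1 := by
  set e : ℕ → ℝ := fun m => E a (2 * m)
  have he0 : e 0 = 1 := by simp [e, E]
  have hconv0 : evenChooseConv e 0 = 1 := by simp [evenChooseConv, he0]
  calc a * evenChooseConv (evenChooseConv e) n
      = ∑ k ∈ range n, ((2 * n).choose (2 * k) : ℝ) * (a * evenChooseConv e (n - k)) + a := by
        rw [evenChooseConv, sum_range_succ, Nat.sub_self, hconv0, Nat.choose_self, mul_add, mul_sum]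
        simp only [Nat.cast_one, mul_one, mul_left_comm a]
    _ = ∑ k ∈ range n, ((2 * n).choose (2 * k) : ℝ) * ((a - 1) * e (n - k)) + a :=
        congrArg (· + a) <| sum_congr rfl fun k hk => by
          rw [mul_evenChooseConv_E a (by have := mem_range.1 hk; omega)]
    _ = (a - 1) * evenChooseConv e n + 1 := by
        rw [evenChooseConv, sum_range_succ, Nat.sub_self, he0, Nat.choose_self, mul_add, mul_sum]
        simp only [Nat.cast_one, mul_one, mul_left_comm (a - 1)]
        ring

theorem two_mul_sub_one_mul_E {n : ℕ} (hn : n ≠ 0) :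
    (2 * a - 1) * E a (2 * n) =
      a - a ^ 2 *
        ∑ k ∈ Icc 1 n, ((2 * n).choose (2 * k) : ℝ) * (4 ^ k / 2) * E a (2 * (n - k)) := by
  have hexpand : evenChooseConv (evenChooseConv fun m => E a (2 * m)) n = E a (2 * n) +
      ∑ k ∈ Icc 1 n, ((2 * n).choose (2 * k) : ℝ) * (4 ^ k / 2) * E a (2 * (n - k)) := by
    rw [evenChooseConv_evenChooseConv, range_eq_Ico, sum_eq_sum_Ico_succ_bot (by omega),
      Ico_add_one_right_eq_Icc]
    simp only [mul_zero, Nat.choose_zero_right, Nat.cast_one, zero_add, range_one, sum_singleton,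
      one_mul, Nat.sub_zero]
    congr 1
    refine sum_congr rfl fun k hk => ?_
    have h4 := congrArg (Int.cast : ℤ → ℝ)
      (two_mul_sum_range_choose_two_mul (by have := mem_Icc.1 hk; omega : k ≠ 0))
    push_cast at h4
    rw [show ∑ j ∈ range (k + 1), ((2 * k).choose (2 * j) : ℝ) = 4 ^ k / 2 by linarith]
  linear_combination a * mul_evenChooseConv_evenChooseConv_E a n - a ^ 2 * hexpand +
    (a - 1) * mul_evenChooseConv_E a hn

end

theorem stmt8_general (a : ℝ) (ha2 : a ≠ 1 / 2) (n : ℕ) (hn : 1 ≤ n) :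
    E a (2 * n) = a / (2 * a - 1) - a ^ 2 * n / (2 * (2 * a - 1)) *
      ∑ k ∈ Finset.Icc 1 n, ((2 * n - 1).choose (2 * k - 1) : ℝ) * (4 ^ k / k) *
        E a (2 * n - 2 * k) := by
  have h2a : 2 * a - 1 ≠ 0 := by contrapose! ha2; linarith
  have hsum : (n : ℝ) * ∑ k ∈ Icc 1 n, ((2 * n - 1).choose (2 * k - 1) : ℝ) * (4 ^ k / k) *
      E a (2 * n - 2 * k) =
        2 * ∑ k ∈ Icc 1 n,
          ((2 * n).choose (2 * k) : ℝ) * (4 ^ k / 2) * E a (2 * (n - k)) := by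
    rw [mul_sum, mul_sum]
    refine sum_congr rfl fun k hk => ?_
    have hk : 1 ≤ k := (mem_Icc.1 hk).1
    have hchoose := congrArg (Nat.cast : ℕ → ℝ) (Nat.mul_choose_two_mul_sub_one n hk)
    push_cast at hchoose
    have hk0 : (k : ℝ) ≠ 0 := by positivity
    rw [Nat.mul_sub]
    field_simp
    linear_combination E a (2 * n - 2 * k) * hchoose
  calc E a (2 * n) = (2 * a - 1) * E a (2 * n) / (2 * a - 1) := by field_simp
    _ = (a - a ^ 2 / 2 * (n * ∑ k ∈ Icc 1 n,
          ((2 * n - 1).choose (2 * k - 1) : ℝ) * (4 ^ k / k) * E a (2 * n - 2 * k))) /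
        (2 * a - 1) := by
      rw [two_mul_sub_one_mul_E a (by omega), hsum]
      ring
    _ = _ := by field_simp

theorem stmt8 (a : ℝ) (ha : a ≠ 0) (ha2 : a ≠ 1 / 2) (n : ℕ) (hn : 1 ≤ n) :
    E a (2 * n) = a / (2 * a - 1) - a ^ 2 * n / (2 * (2 * a - 1)) *
      ∑ k ∈ Finset.Icc 1 n, ((2 * n - 1).choose (2 * k - 1) : ℝ) * (4 ^ k / k) *
        E a (2 * n - 2 * k) :=
  stmt8_general a ha2 n hn
end

section
/- For any nonzero real number a and any positive integer n, ∑_{k=1}^{n} C(2n,2k) 4^{2k} E_{2n-2k,a} = 2(3^{2n}-1)/a + 8(a-1)^2/a^3 + 2^{2n+2}(a-1)/a^2 - 8(a-1)^2(2a-1)/a^4 · E_{2n,a}. -/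
open Finset

/-!
Write `G_n(x) = ∑_k C(2n,2k) x^(2k) E_{2n-2k,a}` (`evenEulerPoly a n x`). The defining
recurrence of `E` says exactly that `a G_m(1) = (a - 1) E_{2m,a}` for `m ≥ 1`. Expanding
`(x + 1)^(2k) + (x - 1)^(2k)` and regrouping turns this into the difference equation
`(1 - a) G_n(x) + a/2 (G_n(x+1) + G_n(x-1)) = x^(2n)`. The left side of the theorem is
`G_n(4) - E_{2n,a}`, and the difference equation at `x = 1, 2, 3`, together with
`G_n(0) = E_{2n,a}` and `a G_n(1) = (a - 1) E_{2n,a}`, determines `G_n(4)`.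
-/

lemma sum_range_succ_eq_add_sum_Icc {M : Type*} [AddCommMonoid M] (f : ℕ → M) (n : ℕ) :
    ∑ i ∈ range (n + 1), f i = f 0 + ∑ i ∈ Icc 1 n, f i := by
  rw [range_eq_Ico, sum_eq_sum_Ico_succ_bot n.succ_pos]
  rfl

lemma E_of_pos (a : ℝ) {m : ℕ} (hm : 0 < m) :
    E a m = -a * ∑ k ∈ Icc 1 (m / 2), (m.choose (2 * k) : ℝ) * E a (m - 2 * k) := by
  obtain ⟨n, rfl⟩ := Nat.exists_eq_succ_of_ne_zero hm.ne'
  rw [E, sum_attach (Icc 1 ((n + 1) / 2))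
    fun k => ((n + 1).choose (2 * k) : ℝ) * E a (n + 1 - 2 * k)]

lemma sum_range_one_add_neg_one_pow_mul {R : Type*} [CommRing R] (g : ℕ → R) (m : ℕ) :
    ∑ i ∈ range (2 * m + 1), (1 + (-1) ^ i) * g i = 2 * ∑ j ∈ range (m + 1), g (2 * j) := by
  induction m with
  | zero => norm_num
  | succ m ih =>
    rw [show 2 * (m + 1) + 1 = 2 * m + 1 + 1 + 1 by ring, sum_range_succ, sum_range_succ, ih,
      sum_range_succ _ (m + 1)]
    simp only [pow_succ, pow_mul]
    ring_nf

lemma add_pow_two_mul_add_sub_pow_two_mul {R : Type*} [CommRing R] (x y : R) (m : ℕ) :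
    (x + y) ^ (2 * m) + (x - y) ^ (2 * m) =
      2 * ∑ j ∈ range (m + 1),
        ((2 * m).choose (2 * j) : R) * x ^ (2 * j) * y ^ (2 * (m - j)) := by
  have h := sum_range_one_add_neg_one_pow_mul
    (fun i => ((2 * m).choose i : R) * x ^ i * y ^ (2 * m - i)) m
  simp only [← Nat.mul_sub] at h
  rw [← h, sub_eq_add_neg, add_pow, add_pow, ← sum_add_distrib]
  refine sum_congr rfl fun i hi => ?_
  have hsign : (-1 : R) ^ (2 * m - i) = (-1) ^ i :=
    neg_one_pow_congr (by rw [Nat.even_sub (Nat.lt_succ_iff.mp (mem_range.mp hi))]; simp)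
  rw [neg_pow, hsign]
  ring

noncomputable def evenEulerPoly (a : ℝ) (n : ℕ) (x : ℝ) : ℝ :=
  ∑ k ∈ range (n + 1), ((2 * n).choose (2 * k) : ℝ) * x ^ (2 * k) * E a (2 * n - 2 * k)

lemma evenEulerPoly_zero_left (a x : ℝ) : evenEulerPoly a 0 x = 1 := by
  simp [evenEulerPoly, E]

lemma evenEulerPoly_zero_right (a : ℝ) (n : ℕ) : evenEulerPoly a n 0 = E a (2 * n) := by
  rw [evenEulerPoly, sum_eq_single 0 (fun k _ hk => by simp [hk]) (by simp)]
  simp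

lemma mul_evenEulerPoly_one (a : ℝ) {n : ℕ} (hn : 1 ≤ n) :
    a * evenEulerPoly a n 1 = (a - 1) * E a (2 * n) := by
  have hE := E_of_pos a (m := 2 * n) (by omega)
  rw [Nat.mul_div_cancel_left n two_pos] at hE
  rw [evenEulerPoly, sum_range_succ_eq_add_sum_Icc]
  simp only [one_pow, mul_one, mul_zero, Nat.choose_zero_right, Nat.cast_one, one_mul,
    Nat.sub_zero]
  linear_combination hE

lemma evenEulerPoly_add_add_sub (a x y : ℝ) (n : ℕ) :
    evenEulerPoly a n (x + y) + evenEulerPoly a n (x - y) =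
      2 * ∑ j ∈ range (n + 1), ((2 * n).choose (2 * j) : ℝ) * x ^ (2 * j) *
        evenEulerPoly a (n - j) y := by
  let f : ℕ → ℕ → ℝ := fun j i => 2 * (((2 * n).choose (2 * j) : ℝ) * x ^ (2 * j) *
      (((2 * n - 2 * j).choose (2 * i) : ℝ) * y ^ (2 * i) * E a (2 * n - 2 * j - 2 * i)))
  have hexpand : ∀ k ∈ range (n + 1),
      ((2 * n).choose (2 * k) : ℝ) * (x + y) ^ (2 * k) * E a (2 * n - 2 * k) +
        ((2 * n).choose (2 * k) : ℝ) * (x - y) ^ (2 * k) * E a (2 * n - 2 * k) =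
      ∑ j ∈ range (k + 1), f j (k - j) := by
    intro k _
    rw [← add_mul, ← mul_add, add_pow_two_mul_add_sub_pow_two_mul, mul_sum, mul_sum, sum_mul]
    refine sum_congr rfl fun j hj => ?_
    have hjk : j ≤ k := Nat.lt_succ_iff.mp (mem_range.mp hj)
    have hchoose := Nat.choose_mul (n := 2 * n) (k := 2 * k) (s := 2 * j) (by omega)
    rw [show 2 * k - 2 * j = 2 * (k - j) by omega] at hchoose
    replace hchoose : ((2 * n).choose (2 * k) : ℝ) * (2 * k).choose (2 * j) =
        (2 * n).choose (2 * j) * (2 * n - 2 * j).choose (2 * (k - j)) := by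
      exact_mod_cast hchoose
    simp only [f, show 2 * n - 2 * j - 2 * (k - j) = 2 * n - 2 * k by omega]
    linear_combination 2 * x ^ (2 * j) * y ^ (2 * (k - j)) * E a (2 * n - 2 * k) * hchoose
  calc evenEulerPoly a n (x + y) + evenEulerPoly a n (x - y)
      = ∑ k ∈ range (n + 1), ∑ j ∈ range (k + 1), f j (k - j) := by
        rw [evenEulerPoly, evenEulerPoly, ← sum_add_distrib]
        exact sum_congr rfl hexpand
    _ = ∑ j ∈ range (n + 1), ∑ i ∈ range (n + 1 - j), f j i := sum_range_diag_flip _ _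
    _ = _ := by
      rw [mul_sum]
      refine sum_congr rfl fun j hj => ?_
      have hjn : j ≤ n := Nat.lt_succ_iff.mp (mem_range.mp hj)
      rw [evenEulerPoly, show n + 1 - j = n - j + 1 by omega,
        show 2 * (n - j) = 2 * n - 2 * j by omega, mul_sum, mul_sum]

lemma evenEulerPoly_recurrence (a x : ℝ) (n : ℕ) :
    (1 - a) * evenEulerPoly a n x +
        a / 2 * (evenEulerPoly a n (x + 1) + evenEulerPoly a n (x - 1)) = x ^ (2 * n) := by
  have hG : evenEulerPoly a n x =
      ∑ j ∈ range n, ((2 * n).choose (2 * j) : ℝ) * x ^ (2 * j) * E a (2 * n - 2 * j) +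
        x ^ (2 * n) := by
    simp [evenEulerPoly, sum_range_succ, E]
  have hlower : a * ∑ j ∈ range n, ((2 * n).choose (2 * j) : ℝ) * x ^ (2 * j) *
        evenEulerPoly a (n - j) 1 =
      (a - 1) * ∑ j ∈ range n,
        ((2 * n).choose (2 * j) : ℝ) * x ^ (2 * j) * E a (2 * n - 2 * j) := by
    rw [mul_sum, mul_sum]
    refine sum_congr rfl fun j hj => ?_
    have h := mul_evenEulerPoly_one a (n := n - j) (by have := mem_range.mp hj; omega)
    rw [show 2 * (n - j) = 2 * n - 2 * j by omega] at h
    linear_combination ((2 * n).choose (2 * j) : ℝ) * x ^ (2 * j) * h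
  rw [evenEulerPoly_add_add_sub, sum_range_succ, Nat.sub_self, evenEulerPoly_zero_left, hG]
  simp only [Nat.choose_self, Nat.cast_one, one_mul, mul_one]
  linear_combination hlower

theorem stmt10 (a : ℝ) (ha : a ≠ 0) (n : ℕ) (hn : 1 ≤ n) :
    ∑ k ∈ Finset.Icc 1 n, ((2 * n).choose (2 * k) : ℝ) * 4 ^ (2 * k) * E a (2 * n - 2 * k) =
      2 * (3 ^ (2 * n) - 1) / a + 8 * (a - 1) ^ 2 / a ^ 3 + 2 ^ (2 * n + 2) * (a - 1) / a ^ 2 -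
        8 * (a - 1) ^ 2 * (2 * a - 1) / a ^ 4 * E a (2 * n) := by
  have e0 := mul_evenEulerPoly_one a hn
  have e1 := evenEulerPoly_recurrence a 1 n
  have e2 := evenEulerPoly_recurrence a 2 n
  have e3 := evenEulerPoly_recurrence a 3 n
  norm_num only [evenEulerPoly_zero_right, one_pow] at e1 e2 e3
  have hL : ∑ k ∈ Icc 1 n, ((2 * n).choose (2 * k) : ℝ) * 4 ^ (2 * k) * E a (2 * n - 2 * k) =
      evenEulerPoly a n 4 - E a (2 * n) := by
    rw [evenEulerPoly, sum_range_succ_eq_add_sum_Icc]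
    simp
  rw [hL]
  field_simp
  linear_combination (2 * a ^ 3) * e3 + (4 * a ^ 2 * (a - 1)) * e2
      + (a * (8 * (a - 1) ^ 2 - 2 * a ^ 2)) * e1
      - ((a - 1) * (4 * a ^ 2 - 8 * (a - 1) ^ 2)) * e0
end
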